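/- For every real w with −√2 < w < √2, lim_{k → ∞} (2π / k^{3/2}) · (k² / (2π(1 + 2w/√k))) · arctan( √((b_k − (1 + 2w/√k)) · ((1 + 2w/√k) − a_k)) / (√(a_k b_k) + 1 + 2w/√k) ) = √(2 − w²); that is, after centering at 1 and scaling space by 2/√k and density by k^{3/2}, the equilibrium density ψ_k converges pointwise to Wigner's semicircle density √(2 − w²)/π times π. -/

import Mathlib

/-- `s_k`, the square root of the left Mhaskar–Rakhmanov–Saff number. -/
noncomputable def sK (k : ℕ) : ℝ :=
  Real.exp ((2 * (k : ℝ) + 1) / (k : ℝ) ^ 2) -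
    Real.sqrt (Real.exp ((4 * (k : ℝ) + 2) / (k : ℝ) ^ 2) - Real.exp (2 / (k : ℝ)))

/-- `t_k`, the square root of the right Mhaskar–Rakhmanov–Saff number. -/
noncomputable def tK (k : ℕ) : ℝ :=
  Real.exp ((2 * (k : ℝ) + 1) / (k : ℝ) ^ 2) +
    Real.sqrt (Real.exp ((4 * (k : ℝ) + 2) / (k : ℝ) ^ 2) - Real.exp (2 / (k : ℝ)))

/-- The left edge `a_k = s_k²` of the support of the equilibrium measure. -/
noncomputable def aK (k : ℕ) : ℝ := (sK k) ^ 2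

/-- The right edge `b_k = t_k²` of the support of the equilibrium measure. -/
noncomputable def bK (k : ℕ) : ℝ := (tK k) ^ 2

/-- The density `ψ_k` of the equilibrium measure for the Stieltjes–Wigert-type weight. -/
noncomputable def psiK (k : ℕ) (x : ℝ) : ℝ :=
  ((k : ℝ) ^ 2 / (2 * Real.pi * x)) *
    Real.arctan (Real.sqrt ((bK k - x) * (x - aK k)) / (Real.sqrt (aK k * bK k) + x))

open Filter Topology Asymptotics Real

/-! With `E = exp ((2k+1)/k²)` and `D` the square root in `s_k`, `t_k`, one has
`√(a_k b_k) = exp (2/k)`, `(a_k + b_k)/2 = 2E² - exp (2/k) = 1 + O(1/k)` and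
`(b_k - a_k)/2 = 2ED ~ 2√2/√k`. Hence at `x = 1 + 2w/√k` the arctan argument is
`~ √((2√2 - 2w)(2√2 + 2w))/(2√k) = √(2 - w²)/√k`, and `arctan t ~ t` gives the limit, since the
prefactor is `√k / x`. -/

theorem Filter.Tendsto.tendsto_zero_of_tendsto_mul {α : Type*} {l : Filter α} {c u : α → ℝ}
    {L : ℝ} (hc : Tendsto c l atTop) (hcu : Tendsto (fun x => c x * u x) l (𝓝 L)) :
    Tendsto u l (𝓝 0) := by
  have h := hcu.mul (tendsto_inv_atTop_zero.comp hc)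
  rw [mul_zero] at h
  refine h.congr' ?_
  filter_upwards [hc.eventually_gt_atTop 0] with x hx
  simp only [Function.comp_apply]
  field_simp

theorem HasDerivAt.tendsto_mul_comp {α : Type*} {l : Filter α} {f : ℝ → ℝ} {f' L : ℝ}
    {c u : α → ℝ} (hf : HasDerivAt f f' 0) (hf0 : f 0 = 0) (hc : Tendsto c l atTop)
    (hcu : Tendsto (fun x => c x * u x) l (𝓝 L)) :
    Tendsto (fun x => c x * f (u x)) l (𝓝 (f' * L)) := by
  have hlin : (fun x => f (u x) - f' * u x) =o[l] u := by
    have := (hasDerivAt_iff_isLittleO.1 hf).comp_tendsto (hc.tendsto_zero_of_tendsto_mul hcu)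
    simpa only [Function.comp_def, hf0, sub_zero, smul_eq_mul, mul_comm] using this
  have herr : Tendsto (fun x => c x * (f (u x) - f' * u x)) l (𝓝 0) :=
    (isLittleO_one_iff ℝ).1 <| ((isBigO_refl c l).mul_isLittleO hlin).trans_isBigO
      (hcu.isBigO_one ℝ)
  simpa using (herr.add (hcu.const_mul f')).congr fun x => by ring

lemma exp_two_div_le (k : ℕ) : exp (2 / k) ≤ exp ((4 * k + 2) / (k : ℝ) ^ 2) := by
  rcases k.eq_zero_or_pos with rfl | hk
  · simp
  rw [exp_le_exp, div_le_div_iff₀ (by positivity) (by positivity)]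
  nlinarith

lemma exp_two_mul_add_one_div_sq_sq (k : ℕ) :
    exp ((2 * k + 1) / (k : ℝ) ^ 2) ^ 2 = exp ((4 * k + 2) / (k : ℝ) ^ 2) := by
  rw [← exp_nat_mul]
  ring_nf

lemma sK_mul_tK (k : ℕ) : sK k * tK k = exp (2 / k) := by
  unfold sK tK
  linear_combination exp_two_mul_add_one_div_sq_sq k - sq_sqrt (sub_nonneg.2 (exp_two_div_le k))

lemma sqrt_aK_mul_bK (k : ℕ) : √(aK k * bK k) = exp (2 / k) := by
  rw [aK, bK, ← mul_pow, sK_mul_tK, sqrt_sq (exp_pos _).le]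

lemma aK_add_bK (k : ℕ) :
    (aK k + bK k) / 2 = 2 * exp ((4 * k + 2) / (k : ℝ) ^ 2) - exp (2 / k) := by
  unfold aK bK sK tK
  linear_combination exp_two_mul_add_one_div_sq_sq k + sq_sqrt (sub_nonneg.2 (exp_two_div_le k))

lemma bK_sub_aK (k : ℕ) :
    (bK k - aK k) / 2 = 2 * √(exp ((4 * k + 2) / (k : ℝ) ^ 2)) *
      √(exp ((4 * k + 2) / (k : ℝ) ^ 2) - exp (2 / k)) := by
  rw [← exp_half]
  unfold aK bK sK tK
  ring_nf

lemma tendsto_sqrt_natCast_atTop : Tendsto (fun k : ℕ => √(k : ℝ)) atTop atTop :=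
  tendsto_sqrt_atTop.comp tendsto_natCast_atTop_atTop

lemma tendsto_natCast_mul_exp_sub_one {u : ℕ → ℝ} {L : ℝ}
    (h : Tendsto (fun k : ℕ => k * u k) atTop (𝓝 L)) :
    Tendsto (fun k : ℕ => k * (exp (u k) - 1)) atTop (𝓝 L) := by
  simpa using ((hasDerivAt_exp 0).sub_const 1).tendsto_mul_comp (by simp)
    tendsto_natCast_atTop_atTop h

lemma tendsto_natCast_mul_exp_four_sub_one :
    Tendsto (fun k : ℕ => k * (exp ((4 * k + 2) / (k : ℝ) ^ 2) - 1)) atTop (𝓝 4) := by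
  refine tendsto_natCast_mul_exp_sub_one ?_
  have h := (tendsto_const_div_atTop_nhds_zero_nat (2 : ℝ)).const_add 4
  rw [add_zero] at h
  refine h.congr' ?_
  filter_upwards [eventually_ne_atTop 0] with k hk
  field_simp

lemma tendsto_natCast_mul_exp_two_sub_one :
    Tendsto (fun k : ℕ => k * (exp (2 / k) - 1)) atTop (𝓝 2) := by
  refine tendsto_natCast_mul_exp_sub_one (tendsto_const_nhds.congr' ?_)
  filter_upwards [eventually_ne_atTop 0] with k hk
  field_simp

lemma tendsto_sqrt_aK_mul_bK : Tendsto (fun k => √(aK k * bK k)) atTop (𝓝 1) := by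
  simp_rw [sqrt_aK_mul_bK]
  simpa [Function.comp_def] using
    (continuous_exp.tendsto 0).comp (tendsto_const_div_atTop_nhds_zero_nat (2 : ℝ))

lemma tendsto_sqrt_mul_aK_add_bK_sub_one :
    Tendsto (fun k : ℕ => √k * ((aK k + bK k) / 2 - 1)) atTop (𝓝 0) := by
  refine tendsto_sqrt_natCast_atTop.tendsto_zero_of_tendsto_mul (L := 2 * 4 - 2) ?_
  refine ((tendsto_natCast_mul_exp_four_sub_one.const_mul 2).sub
    tendsto_natCast_mul_exp_two_sub_one).congr fun k => ?_
  rw [← mul_assoc (√(k : ℝ)), mul_self_sqrt (Nat.cast_nonneg k), aK_add_bK]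
  ring

lemma tendsto_sqrt_mul_bK_sub_aK :
    Tendsto (fun k : ℕ => √k * ((bK k - aK k) / 2)) atTop (𝓝 (2 * √2)) := by
  have hp : Tendsto (fun k : ℕ => exp ((4 * k + 2) / (k : ℝ) ^ 2)) atTop (𝓝 1) :=
    tendsto_sub_nhds_zero_iff.1 <|
      tendsto_natCast_atTop_atTop.tendsto_zero_of_tendsto_mul tendsto_natCast_mul_exp_four_sub_one
  have hpq : Tendsto (fun k : ℕ => k * (exp ((4 * k + 2) / (k : ℝ) ^ 2) - exp (2 / k))) atTop
      (𝓝 (4 - 2)) :=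
    (tendsto_natCast_mul_exp_four_sub_one.sub tendsto_natCast_mul_exp_two_sub_one).congr
      fun k => by ring
  norm_num at hpq
  simpa using ((hp.sqrt.const_mul 2).mul hpq.sqrt).congr fun k => by
    rw [bK_sub_aK, sqrt_mul (Nat.cast_nonneg k)]
    ring

lemma tendsto_sqrt_mul_sqrt_bK_sub_mul_sub_aK (w : ℝ) :
    Tendsto (fun k : ℕ => √k * √((bK k - (1 + 2 * w / √k)) * ((1 + 2 * w / √k) - aK k)))
      atTop (𝓝 (2 * √(2 - w ^ 2))) := by
  have hb : Tendsto (fun k : ℕ => √k * (bK k - (1 + 2 * w / √k))) atTop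
      (𝓝 (0 + 2 * √2 - 2 * w)) := by
    refine ((tendsto_sqrt_mul_aK_add_bK_sub_one.add tendsto_sqrt_mul_bK_sub_aK).sub_const
      (2 * w)).congr' ?_
    filter_upwards [eventually_ne_atTop 0] with k hk
    have : √(k : ℝ) ≠ 0 := by positivity
    field_simp
    ring
  have ha : Tendsto (fun k : ℕ => √k * ((1 + 2 * w / √k) - aK k)) atTop
      (𝓝 (2 * √2 - 0 + 2 * w)) := by
    refine ((tendsto_sqrt_mul_bK_sub_aK.sub tendsto_sqrt_mul_aK_add_bK_sub_one).add_const
      (2 * w)).congr' ?_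
    filter_upwards [eventually_ne_atTop 0] with k hk
    have : √(k : ℝ) ≠ 0 := by positivity
    field_simp
    ring
  have hlim : √((0 + 2 * √2 - 2 * w) * (2 * √2 - 0 + 2 * w)) = 2 * √(2 - w ^ 2) := by
    rw [show (0 + 2 * √2 - 2 * w) * (2 * √2 - 0 + 2 * w) = 2 ^ 2 * (2 - w ^ 2) by
      ring_nf; rw [sq_sqrt zero_le_two]; ring]
    rw [sqrt_mul (by positivity), sqrt_sq zero_le_two]
  rw [← hlim]
  refine (hb.mul ha).sqrt.congr fun k => ?_
  rw [← sqrt_mul (Nat.cast_nonneg k), mul_mul_mul_comm, mul_self_sqrt (Nat.cast_nonneg k)]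

lemma tendsto_sqrt_mul_arctan_arg (w : ℝ) :
    Tendsto (fun k : ℕ => √k * (√((bK k - (1 + 2 * w / √k)) * ((1 + 2 * w / √k) - aK k)) /
      (√(aK k * bK k) + 1 + 2 * w / √k))) atTop (𝓝 (√(2 - w ^ 2))) := by
  have hden : Tendsto (fun k : ℕ => √(aK k * bK k) + 1 + 2 * w / √k) atTop (𝓝 (1 + 1 + 0)) :=
    (tendsto_sqrt_aK_mul_bK.add_const 1).add
      (tendsto_sqrt_natCast_atTop.const_div_atTop (2 * w))
  norm_num at hden
  have h := (tendsto_sqrt_mul_sqrt_bK_sub_mul_sub_aK w).div hden two_ne_zero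
  rw [mul_div_cancel_left₀ _ two_ne_zero] at h
  exact h.congr fun k => mul_div_assoc _ _ _

theorem equilibrium_density_semicircle_limit_general (w : ℝ) :
    Tendsto
      (fun k : ℕ =>
        (2 * Real.pi / (k : ℝ) ^ ((3 : ℝ) / 2)) *
          ((k : ℝ) ^ 2 / (2 * Real.pi * (1 + 2 * w / Real.sqrt k))) *
          Real.arctan
            (Real.sqrt ((bK k - (1 + 2 * w / Real.sqrt k)) *
                ((1 + 2 * w / Real.sqrt k) - aK k)) /
              (Real.sqrt (aK k * bK k) + 1 + 2 * w / Real.sqrt k)))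
      atTop (nhds (Real.sqrt (2 - w ^ 2))) := by
  have hx : Tendsto (fun k : ℕ => 1 + 2 * w / √k) atTop (𝓝 (1 + 0)) :=
    (tendsto_sqrt_natCast_atTop.const_div_atTop (2 * w)).const_add 1
  have harctan := (hasDerivAt_arctan 0).tendsto_mul_comp arctan_zero tendsto_sqrt_natCast_atTop
    (tendsto_sqrt_mul_arctan_arg w)
  rw [add_zero] at hx
  rw [show (1 : ℝ) / (1 + 0 ^ 2) = 1 by norm_num, one_mul] at harctan
  rw [← div_one √(2 - w ^ 2)]
  refine (harctan.div hx one_ne_zero).congr' ?_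
  filter_upwards [eventually_gt_atTop 0] with k hk
  have hk : (0 : ℝ) < k := Nat.cast_pos.2 hk
  rw [Pi.div_apply, show (k : ℝ) ^ ((3 : ℝ) / 2) = k * √k by
    rw [sqrt_eq_rpow, ← rpow_one_add' hk.le (by norm_num)]; norm_num]
  generalize arctan _ = A
  generalize 1 + 2 * w / √k = x
  field_simp
  rw [sq_sqrt hk.le]
  ring

theorem equilibrium_density_semicircle_limit (w : ℝ)
    (hw₁ : -Real.sqrt 2 < w) (hw₂ : w < Real.sqrt 2) :
    Tendsto
      (fun k : ℕ =>
        (2 * Real.pi / (k : ℝ) ^ ((3 : ℝ) / 2)) *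
          ((k : ℝ) ^ 2 / (2 * Real.pi * (1 + 2 * w / Real.sqrt k))) *
          Real.arctan
            (Real.sqrt ((bK k - (1 + 2 * w / Real.sqrt k)) *
                ((1 + 2 * w / Real.sqrt k) - aK k)) /
              (Real.sqrt (aK k * bK k) + 1 + 2 * w / Real.sqrt k)))
      atTop (nhds (Real.sqrt (2 - w ^ 2))) :=
  equilibrium_density_semicircle_limit_general w
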